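/- arXiv:1807.07045 — 3 statements merged into one kernel-verified Lean document; each statement's English description precedes it below -/
import Mathlib

section
/- Let k₀ be a field of characteristic ≠ 2 and b, c ∈ k₀ˣ with b not a square in k₀. Then c lies in the intersection of k₀ˣ with the product set D(⟨1,−(b+1)⟩ over k₀(√b)) · D(⟨1,−(b+c²)⟩ over k₀(√b)), i.e., c = αβ where α is represented by ⟨1,−(b+1)⟩ and β by ⟨1,−(b+c²)⟩ over k₀(√b). -/
open scoped BigOperators

/-- The diagonal quadratic form with weights `w`, as a function on `ι → K`. -/
def diagQF {K : Type} [Field K] {ι : Type} [Fintype ι] (w : ι → K) : (ι → K) → K :=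
  fun v => ∑ i, w i * v i ^ 2

/-- `c` is a value represented by the diagonal quadratic form with weights `w`. -/
def RepresentsQF {K : Type} [Field K] {ι : Type} [Fintype ι] (w : ι → K) (c : K) : Prop :=
  ∃ v, diagQF w v = c

/-- Isometry (isomorphism) of diagonal quadratic forms. -/
def QFEquiv (K : Type) [Field K] {ι κ : Type} [Fintype ι] [Fintype κ]
    (w : ι → K) (w' : κ → K) : Prop :=
  ∃ e : (ι → K) ≃ₗ[K] (κ → K), ∀ v, diagQF w' (e v) = diagQF w v

/-- Scaling a diagonal quadratic form by `c` : the form `⟨c⟩·q`. -/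
def smulW {K : Type} [Field K] {ι : Type} (c : K) (w : ι → K) : ι → K := fun i => c * w i

/-- Tensor product of diagonal quadratic forms. -/
def tensorW {K : Type} [Field K] {ι κ : Type} (w₁ : ι → K) (w₂ : κ → K) : ι × κ → K :=
  fun p => w₁ p.1 * w₂ p.2

/-- The 1-fold Pfister form `⟨⟨a⟩⟩ = ⟨1, -a⟩`. -/
def pf1 {K : Type} [Field K] (a : K) : Fin 2 → K := ![1, -a]

/-- The 2-fold Pfister form `⟨⟨a, d⟩⟩ = ⟨1,-a⟩ ⊗ ⟨1,-d⟩`. -/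
def pf2 {K : Type} [Field K] (a d : K) : Fin 2 × Fin 2 → K := tensorW (pf1 a) (pf1 d)

/-- The n-fold Pfister form `⟨⟨a 0, …, a (n-1)⟩⟩`. -/
def pfW {K : Type} [Field K] {n : ℕ} (a : Fin n → K) : (Fin n → Fin 2) → K :=
  fun f => ∏ i, if f i = 0 then 1 else -a i

/-- Orthogonal sum of diagonal quadratic forms. -/
def orthW {K : Type} [Field K] {ι κ : Type} (w₁ : ι → K) (w₂ : κ → K) : ι ⊕ κ → K :=
  Sum.elim w₁ w₂

/-- The weights of an orthogonal sum of `m` hyperbolic planes. -/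
def hypW (K : Type) [Field K] (m : ℕ) : Fin m ⊕ Fin m → K :=
  Sum.elim (fun _ => 1) (fun _ => -1)

/-- Witt equivalence of diagonal quadratic forms: they become isometric after
adding hyperbolic planes. -/
def WittEquiv (K : Type) [Field K] {ι κ : Type} [Fintype ι] [Fintype κ]
    (w : ι → K) (w' : κ → K) : Prop :=
  ∃ m m' : ℕ, QFEquiv K (orthW w (hypW K m)) (orthW w' (hypW K m'))

/-- A diagonal quadratic form is anisotropic. -/
def AnisotropicQF {K : Type} [Field K] {ι : Type} [Fintype ι] (w : ι → K) : Prop :=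
  ∀ v, diagQF w v = 0 → v = 0

/-- Base change of a diagonal quadratic form along a field extension. -/
def bcW {k K : Type} [Field k] [Field K] [Algebra k K] {ι : Type} (w : ι → k) : ι → K :=
  fun i => algebraMap k K (w i)

/-!
Over `K ∋ s` with `s² = b`, the form `⟨1, -(x² + y²)⟩` takes the value `(x + y)² - (x² + y²) = 2xy`.
Taking `(x, y) = (s, c)` gives `β = 2cs` for `⟨1, -(b + c²)⟩`; taking `(x, y) = (s, 1)` gives `2s`
for `⟨1, -(b + 1)⟩`, and rescaling by the square `(2s)⁻²` gives `α = (2s)⁻¹`. Then `αβ = c`.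
-/

theorem diagQF_pf1 {K : Type} [Field K] (a x y : K) :
    diagQF (pf1 a) ![x, y] = x ^ 2 - a * y ^ 2 := by
  simp only [diagQF, pf1, Fin.sum_univ_two, Matrix.cons_val_zero, Matrix.cons_val_one]
  ring

theorem RepresentsQF.sq_mul {K : Type} [Field K] {ι : Type} [Fintype ι] {w : ι → K} {t : K}
    (h : RepresentsQF w t) (u : K) : RepresentsQF w (u ^ 2 * t) := by
  obtain ⟨v, rfl⟩ := h
  refine ⟨u • v, ?_⟩
  simp only [diagQF, Pi.smul_apply, smul_eq_mul, Finset.mul_sum]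
  exact Finset.sum_congr rfl fun i _ => by ring

theorem representsQF_pf1_sq_add_sq {K : Type} [Field K] (x y : K) :
    RepresentsQF (pf1 (x ^ 2 + y ^ 2)) (2 * x * y) :=
  ⟨![x + y, 1], by rw [diagQF_pf1]; ring⟩

theorem stmt_2_general {k₀ K : Type} [Field k₀] [Field K] [Algebra k₀ K]
    (hchar : (2 : k₀) ≠ 0) (b c : k₀) (hb : b ≠ 0) (hc : c ≠ 0)
    (s : K) (hs : s ^ 2 = algebraMap k₀ K b) :
    ∃ α β : K, α ≠ 0 ∧ β ≠ 0 ∧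
      RepresentsQF (pf1 (algebraMap k₀ K (b + 1))) α ∧
      RepresentsQF (pf1 (algebraMap k₀ K (b + c ^ 2))) β ∧
      algebraMap k₀ K c = α * β := by
  have h2 : (2 : K) ≠ 0 := by
    rw [← map_ofNat (algebraMap k₀ K) 2]
    exact (map_ne_zero _).mpr hchar
  have hs0 : s ≠ 0 := by
    rintro rfl
    exact hb ((map_eq_zero (algebraMap k₀ K)).mp (by simpa using hs.symm))
  have hc' : algebraMap k₀ K c ≠ 0 := (map_ne_zero _).mpr hc
  have h2s : 2 * s ≠ 0 := mul_ne_zero h2 hs0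
  refine ⟨(2 * s)⁻¹, 2 * s * algebraMap k₀ K c, inv_ne_zero h2s, mul_ne_zero h2s hc', ?_, ?_, ?_⟩
  · have h := (representsQF_pf1_sq_add_sq s 1).sq_mul (2 * s)⁻¹
    rwa [one_pow, mul_one, hs, ← map_one (algebraMap k₀ K), ← map_add, sq, mul_assoc,
      inv_mul_cancel₀ h2s, mul_one] at h
  · simpa [hs] using representsQF_pf1_sq_add_sq s (algebraMap k₀ K c)
  · rw [inv_mul_cancel_left₀ h2s]

/-- `c` lies in `k₀ˣ ∩ (D_{k₀(√b)}(⟨1,−(b+1)⟩) · D_{k₀(√b)}(⟨1,−(b+c²)⟩))`: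
`c = α·β` where `α` is a nonzero value of `⟨1,−(b+1)⟩` and `β` a nonzero value of
`⟨1,−(b+c²)⟩` over `k₀(√b)`. -/
theorem stmt_2 {k₀ K : Type} [Field k₀] [Field K] [Algebra k₀ K]
    (hchar : (2 : k₀) ≠ 0) (b c : k₀) (hb : b ≠ 0) (hc : c ≠ 0)
    (hbns : ¬∃ x : k₀, x ^ 2 = b)
    (s : K) (hs : s ^ 2 = algebraMap k₀ K b) :
    ∃ α β : K, α ≠ 0 ∧ β ≠ 0 ∧
      RepresentsQF (pf1 (algebraMap k₀ K (b + 1))) α ∧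
      RepresentsQF (pf1 (algebraMap k₀ K (b + c ^ 2))) β ∧
      algebraMap k₀ K c = α * β :=
  stmt_2_general hchar b c hb hc s hs
end

section
/- Let q be an n-fold Pfister quadratic form over a field K of characteristic ≠ 2, and let λ ∈ Kˣ be a nonzero value represented by q. Then ⟨λ⟩·q ≅ q, i.e., every represented nonzero value of a Pfister form is a similarity factor of it. -/
open scoped BigOperators

/-!
Induction on `n`, via `⟨⟨a₀, …, aₙ⟩⟩ ≅ q ⊥ ⟨-a₀⟩q` with `q = ⟨⟨a₁, …, aₙ⟩⟩`: it suffices that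
`q ⊥ ⟨b⟩q` is round whenever `q` is. A value of `q ⊥ ⟨b⟩q` is `c = x + b y` with `x`, `y` values
of `q`, and `⟨x⟩q ≅ q`, `⟨y⟩q ≅ q` when `x, y ≠ 0`. In the generic case the binary isometry
`⟨x, b y⟩ ≅ ⟨c, c · x · b y⟩`, tensored with `q`, gives
`⟨c⟩(q ⊥ ⟨b⟩q) = ⟨c⟩q ⊥ ⟨c b⟩q ≅ ⟨c⟩q ⊥ ⟨c · x · b y⟩q ≅ ⟨x⟩q ⊥ ⟨b y⟩q ≅ q ⊥ ⟨b⟩q`;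
the cases `x = 0` and `b y = 0` are direct.
-/

local infix:50 " ≅q " => QFEquiv _

namespace QFEquiv

variable {K : Type} [Field K] {ι κ μ : Type} [Fintype ι] [Fintype κ] [Fintype μ]

theorem refl (w : ι → K) : w ≅q w := ⟨LinearEquiv.refl K _, fun _ => rfl⟩

theorem symm {w : ι → K} {w' : κ → K} (h : w ≅q w') : w' ≅q w := by
  obtain ⟨e, he⟩ := h
  exact ⟨e.symm, fun v => by rw [← he, e.apply_symm_apply]⟩

theorem trans {w : ι → K} {w' : κ → K} {w'' : μ → K} (h : w ≅q w') (h' : w' ≅q w'') :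
    w ≅q w'' := by
  obtain ⟨e, he⟩ := h
  obtain ⟨e', he'⟩ := h'
  exact ⟨e.trans e', fun v => (he' (e v)).trans (he v)⟩

instance : @Trans (ι → K) (κ → K) (μ → K) (QFEquiv K) (QFEquiv K) (QFEquiv K) := ⟨trans⟩

theorem of_equiv {w : ι → K} {w' : κ → K} (σ : ι ≃ κ) (hw : ∀ i, w' (σ i) = w i) : w ≅q w' := by
  refine ⟨LinearEquiv.funCongrLeft K K σ.symm, fun v => ?_⟩
  simp only [diagQF, LinearEquiv.funCongrLeft_apply, LinearMap.funLeft_apply]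
  rw [← σ.sum_comp]
  simp [hw]

theorem representsQF {w : ι → K} {w' : κ → K} (h : w ≅q w') {c : K} (hc : RepresentsQF w c) :
    RepresentsQF w' c := by
  obtain ⟨e, he⟩ := h
  obtain ⟨v, rfl⟩ := hc
  exact ⟨e v, he v⟩

end QFEquiv

section Operations

variable {K : Type} [Field K] {ι κ : Type}

theorem smulW_smulW (c d : K) (w : ι → K) : smulW c (smulW d w) = smulW (c * d) w :=
  funext fun i => (mul_assoc c d (w i)).symm

theorem smulW_orthW (c : K) (w₁ : ι → K) (w₂ : κ → K) :
    smulW c (orthW w₁ w₂) = orthW (smulW c w₁) (smulW c w₂) := by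
  funext s
  cases s <;> rfl

variable [Fintype ι] [Fintype κ]

theorem diagQF_smulW (c : K) (w v : ι → K) : diagQF (smulW c w) v = c * diagQF w v := by
  simp only [diagQF, smulW, Finset.mul_sum, mul_assoc]

theorem diagQF_orthW (w₁ : ι → K) (w₂ : κ → K) (v : ι ⊕ κ → K) :
    diagQF (orthW w₁ w₂) v = diagQF w₁ (v ∘ Sum.inl) + diagQF w₂ (v ∘ Sum.inr) := by
  simp [diagQF, orthW, Fintype.sum_sum_type]

theorem QFEquiv.smulW (c : K) {w : ι → K} {w' : κ → K} (h : w ≅q w') :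
    smulW c w ≅q smulW c w' := by
  obtain ⟨e, he⟩ := h
  exact ⟨e, fun v => by rw [diagQF_smulW, diagQF_smulW, he]⟩

theorem QFEquiv.orthW {ι' κ' : Type} [Fintype ι'] [Fintype κ']
    {w₁ : ι → K} {w₁' : ι' → K} {w₂ : κ → K} {w₂' : κ' → K} (h₁ : w₁ ≅q w₁') (h₂ : w₂ ≅q w₂') :
    orthW w₁ w₂ ≅q orthW w₁' w₂' := by
  obtain ⟨e₁, he₁⟩ := h₁
  obtain ⟨e₂, he₂⟩ := h₂
  refine ⟨(LinearEquiv.sumArrowLequivProdArrow ι κ K K).trans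
    ((e₁.prodCongr e₂).trans (LinearEquiv.sumArrowLequivProdArrow ι' κ' K K).symm), fun v => ?_⟩
  rw [diagQF_orthW, diagQF_orthW]
  simp only [LinearEquiv.trans_apply, LinearEquiv.prodCongr_apply, Function.comp_def,
    LinearEquiv.sumArrowLequivProdArrow_symm_apply_inl,
    LinearEquiv.sumArrowLequivProdArrow_symm_apply_inr, he₁, he₂]
  rfl

theorem qfEquiv_smulW_sq {d : K} (hd : d ≠ 0) (w : ι → K) : smulW (d ^ 2) w ≅q w := by
  refine ⟨LinearEquiv.smulOfNeZero K _ d hd, fun v => ?_⟩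
  simp only [diagQF, smulW]
  refine Finset.sum_congr rfl fun i _ => ?_
  simp only [LinearEquiv.smulOfNeZero_apply, Pi.smul_apply, smul_eq_mul]
  ring

theorem qfEquiv_orthW_comm (w₁ : ι → K) (w₂ : κ → K) : orthW w₁ w₂ ≅q orthW w₂ w₁ :=
  QFEquiv.of_equiv (Equiv.sumComm ι κ) fun s => by cases s <;> rfl

theorem qfEquiv_orthW_smulW_add {x y : K} (hxy : x + y ≠ 0) (q : κ → K) :
    orthW (smulW (x + y) q) (smulW (x * y * (x + y)) q) ≅q orthW (smulW x q) (smulW y q) := by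
  let π := fun s : κ ⊕ κ => LinearMap.proj (R := K) (φ := fun _ => K) s
  -- `x (u + y v)² + y (u - x v)² = (x + y) u² + x y (x + y) v²`
  let F : ((κ ⊕ κ) → K) →ₗ[K] ((κ ⊕ κ) → K) := LinearMap.pi <|
    Sum.elim (fun j => π (.inl j) + y • π (.inr j)) (fun j => π (.inl j) - x • π (.inr j))
  let G : ((κ ⊕ κ) → K) →ₗ[K] ((κ ⊕ κ) → K) := (x + y)⁻¹ • LinearMap.pi
    (Sum.elim (fun j => x • π (.inl j) + y • π (.inr j)) (fun j => π (.inl j) - π (.inr j)))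
  have hF (v : κ ⊕ κ → K) (j : κ) : F v (.inl j) = v (.inl j) + y * v (.inr j) ∧
      F v (.inr j) = v (.inl j) - x * v (.inr j) := ⟨rfl, rfl⟩
  have hG (v : κ ⊕ κ → K) (j : κ) :
      G v (.inl j) = (x + y)⁻¹ * (x * v (.inl j) + y * v (.inr j)) ∧
      G v (.inr j) = (x + y)⁻¹ * (v (.inl j) - v (.inr j)) := ⟨rfl, rfl⟩
  have hGF : G ∘ₗ F = LinearMap.id := by
    ext v (j | j) <;> simp only [LinearMap.comp_apply, LinearMap.id_apply, hF, hG] <;>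
      field_simp <;> ring
  have hFG : F ∘ₗ G = LinearMap.id := by
    ext v (j | j) <;> simp only [LinearMap.comp_apply, LinearMap.id_apply, hF, hG] <;>
      field_simp <;> ring
  refine ⟨LinearEquiv.ofLinearMap F G hFG hGF, fun v => ?_⟩
  rw [diagQF_orthW, diagQF_orthW, diagQF_smulW, diagQF_smulW, diagQF_smulW, diagQF_smulW]
  simp only [diagQF, Function.comp_apply, LinearEquiv.coe_ofLinearMap, hF, Finset.mul_sum,
    ← Finset.sum_add_distrib]
  refine Finset.sum_congr rfl fun j _ => ?_
  ring

end Operations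

theorem qfEquiv_pfW_succ {K : Type} [Field K] {n : ℕ} (a : Fin (n + 1) → K) :
    pfW a ≅q orthW (pfW (Fin.tail a)) (smulW (-a 0) (pfW (Fin.tail a))) := by
  refine QFEquiv.of_equiv ((Fin.consEquiv fun _ => Fin 2).symm.trans
    ((finTwoEquiv.prodCongr (Equiv.refl _)).trans (Equiv.boolProdEquivSum _))) fun f => ?_
  have hsplit : pfW a f = (if f 0 = 0 then 1 else -a 0) * pfW (Fin.tail a) (Fin.tail f) :=
    Fin.prod_univ_succ _
  obtain h | h := Fin.exists_fin_two.mp ⟨f 0, rfl⟩ <;>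
    simp [hsplit, h, orthW, smulW, Fin.consEquiv, finTwoEquiv]

section IsRound

variable {K : Type} [Field K] {ι κ : Type} [Fintype ι] [Fintype κ]

def IsRound (w : ι → K) : Prop :=
  ∀ c, c ≠ 0 → RepresentsQF w c → smulW c w ≅q w

theorem IsRound.of_qfEquiv {w : ι → K} {w' : κ → K} (h : w ≅q w') (hw : IsRound w) :
    IsRound w' := fun c hc hrep =>
  calc smulW c w' ≅q smulW c w := (h.smulW c).symm
    _ ≅q w := hw c hc (h.symm.representsQF hrep)
    _ ≅q w' := h

theorem IsRound.smulW_mul {q : ι → K} (hq : IsRound q) {d : K} (hd : d ≠ 0)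
    (hrep : RepresentsQF q d) (t : K) : smulW (t * d) q ≅q smulW t q := by
  rw [← smulW_smulW]
  exact (hq d hd hrep).smulW t

theorem IsRound.orthW_smulW {q : ι → K} (hq : IsRound q) (b : K) :
    IsRound (orthW q (smulW b q)) := by
  rintro c hc ⟨v, hv⟩
  rw [diagQF_orthW, diagQF_smulW] at hv
  set x := diagQF q (v ∘ Sum.inl)
  set y := diagQF q (v ∘ Sum.inr)
  have hx : RepresentsQF q x := ⟨_, rfl⟩
  have hy : RepresentsQF q y := ⟨_, rfl⟩
  rw [smulW_orthW, smulW_smulW]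
  by_cases hby : b * y = 0
  · rw [hby, add_zero] at hv
    subst hv
    have hcq := hq x hc hx
    refine hcq.orthW ?_
    rw [mul_comm, ← smulW_smulW]
    exact hcq.smulW b
  have hy0 : y ≠ 0 := right_ne_zero_of_mul hby
  by_cases hx0 : x = 0
  · rw [hx0, zero_add] at hv
    subst hv
    calc orthW (smulW (b * y) q) (smulW (b * y * b) q)
        ≅q orthW (smulW b q) (smulW (b ^ 2) q) := by
          refine (hq.smulW_mul hy0 hy b).orthW ?_
          rw [show b * y * b = b ^ 2 * y by ring]
          exact hq.smulW_mul hy0 hy _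
      _ ≅q orthW (smulW b q) q :=
          (QFEquiv.refl _).orthW (qfEquiv_smulW_sq (left_ne_zero_of_mul hby) q)
      _ ≅q _ := qfEquiv_orthW_comm _ _
  · subst hv
    calc orthW (smulW (x + b * y) q) (smulW ((x + b * y) * b) q)
        ≅q orthW (smulW (x + b * y) q) (smulW (x * (b * y) * (x + b * y)) q) := by
          refine (QFEquiv.refl _).orthW ?_
          rw [show x * (b * y) * (x + b * y) = (x + b * y) * b * x * y by ring]
          exact ((hq.smulW_mul hy0 hy _).trans (hq.smulW_mul hx0 hx _)).symm
      _ ≅q orthW (smulW x q) (smulW (b * y) q) := qfEquiv_orthW_smulW_add hc q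
      _ ≅q _ := (hq x hx0 hx).orthW (hq.smulW_mul hy0 hy b)

theorem isRound_pfW_zero (a : Fin 0 → K) : IsRound (pfW a) := by
  rintro c hc ⟨v, rfl⟩
  have hsq : diagQF (pfW a) v = v default ^ 2 := by
    rw [diagQF, Fintype.sum_unique, pfW, Finset.univ_eq_empty, Finset.prod_empty, one_mul]
    exact congrArg (v · ^ 2) (Subsingleton.elim _ _)
  rw [hsq] at hc ⊢
  exact qfEquiv_smulW_sq (pow_ne_zero_iff two_ne_zero |>.mp hc) _

theorem isRound_pfW {n : ℕ} (a : Fin n → K) : IsRound (pfW a) := by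
  induction n with
  | zero => exact isRound_pfW_zero a
  | succ n ih =>
    exact ((ih (Fin.tail a)).orthW_smulW (-a 0)).of_qfEquiv (qfEquiv_pfW_succ a).symm

end IsRound

theorem stmt_5_general {K : Type} [Field K]
    {n : ℕ} (a : Fin n → K)
    (c : K) (hc : c ≠ 0) (hrep : RepresentsQF (pfW a) c) :
    QFEquiv K (smulW c (pfW a)) (pfW a) :=
  isRound_pfW a c hc hrep

/-- a Pfister form is round: every nonzero represented value `c` of an
n-fold Pfister form `q` is a similarity factor, i.e. `⟨c⟩·q ≅ q`. -/
theorem stmt_5 {K : Type} [Field K] (hchar : (2 : K) ≠ 0)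
    {n : ℕ} (a : Fin n → K) (ha : ∀ i, a i ≠ 0)
    (c : K) (hc : c ≠ 0) (hrep : RepresentsQF (pfW a) c) :
    QFEquiv K (smulW c (pfW a)) (pfW a) :=
  stmt_5_general a c hc hrep
end

section
/- Let K be a field of characteristic ≠ 2 with elements a, b, c and X, Y satisfying X² − aY² + ab = 0 and b+c² ≠ 0, b+1 ≠ 0. Set c' = 1 − (b+1)c/(b+c²). Then the 2-fold Pfister form ⟨⟨a, (b+1)(b+c²)⟩⟩ over K represents −2aYc'. (The identity: X² − a(Y+1)² plus −(b+1)(b+c²)[(X/(b+c²))² − a((Y+c)/(b+c²))²] equals −2aYc'.) -/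
/-!
Since `⟨⟨a, d⟩⟩ = ⟨1, -a⟩ ⊥ -d·⟨1, -a⟩`, it represents `n₁ - d n₂` for any two values
`n₁, n₂` of the norm form `x² - a y²`. Take `n₁` at `(X, Y + 1)` and `n₂` at
`(X, Y + c) / (b + c²)`; eliminating `X²` with `X² = a (Y² - b)` leaves `-2aYc'`.
-/

open scoped BigOperators

theorem diagQF_pf2 {K : Type} [Field K] (a d : K) (v : Fin 2 × Fin 2 → K) :
    diagQF (pf2 a d) v
      = (v (0, 0) ^ 2 - a * v (1, 0) ^ 2) + (-d) * (v (0, 1) ^ 2 - a * v (1, 1) ^ 2) := by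
  simp only [diagQF, pf2, tensorW, pf1, Fintype.sum_prod_type, Fin.sum_univ_two,
    Matrix.cons_val_zero, Matrix.cons_val_one]
  ring

theorem representsQF_pf2 {K : Type} [Field K] (a d x y z w : K) :
    RepresentsQF (pf2 a d) ((x ^ 2 - a * y ^ 2) + (-d) * (z ^ 2 - a * w ^ 2)) :=
  ⟨fun p => (![![x, z], ![y, w]] : Fin 2 → Fin 2 → K) p.1 p.2, by
    rw [diagQF_pf2]; rfl⟩

theorem norm_sub_mul_norm_eq {K : Type} [Field K] {a b c X Y : K}
    (hrel : X ^ 2 - a * Y ^ 2 + a * b = 0) (hbc : b + c ^ 2 ≠ 0) :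
    (X ^ 2 - a * (Y + 1) ^ 2)
        + (-((b + 1) * (b + c ^ 2))) *
          ((X / (b + c ^ 2)) ^ 2 - a * ((Y + c) / (b + c ^ 2)) ^ 2)
        = -(2 * a * Y * (1 - (b + 1) * c / (b + c ^ 2))) := by
  field_simp
  linear_combination (c ^ 2 - 1) * hrel

theorem stmt_11_general {K : Type} [Field K]
    (a b c X Y : K) (hrel : X ^ 2 - a * Y ^ 2 + a * b = 0)
    (hbc : b + c ^ 2 ≠ 0) :
    (X ^ 2 - a * (Y + 1) ^ 2)
        + (-((b + 1) * (b + c ^ 2))) *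
          ((X / (b + c ^ 2)) ^ 2 - a * ((Y + c) / (b + c ^ 2)) ^ 2)
        = -(2 * a * Y * (1 - (b + 1) * c / (b + c ^ 2))) ∧
    RepresentsQF (pf2 a ((b + 1) * (b + c ^ 2)))
      (-(2 * a * Y * (1 - (b + 1) * c / (b + c ^ 2)))) := by
  have hid := norm_sub_mul_norm_eq (c := c) hrel hbc
  exact ⟨hid, hid ▸ representsQF_pf2 _ _ _ _ _ _⟩

/-- with `X² − aY² + ab = 0`, `b+c² ≠ 0`, `b+1 ≠ 0` and
`c' = 1 − (b+1)c/(b+c²)`, the Pfister form `⟨⟨a,(b+1)(b+c²)⟩⟩` represents `−2aYc'`,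
via the stated identity. -/
theorem stmt_11 {K : Type} [Field K] (hchar : (2 : K) ≠ 0)
    (a b c X Y : K) (hrel : X ^ 2 - a * Y ^ 2 + a * b = 0)
    (hbc : b + c ^ 2 ≠ 0) (hb1 : b + 1 ≠ 0) :
    (X ^ 2 - a * (Y + 1) ^ 2)
        + (-((b + 1) * (b + c ^ 2))) *
          ((X / (b + c ^ 2)) ^ 2 - a * ((Y + c) / (b + c ^ 2)) ^ 2)
        = -(2 * a * Y * (1 - (b + 1) * c / (b + c ^ 2))) ∧
    RepresentsQF (pf2 a ((b + 1) * (b + c ^ 2)))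
      (-(2 * a * Y * (1 - (b + 1) * c / (b + c ^ 2)))) :=
  stmt_11_general a b c X Y hrel hbc
end
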